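/- Let η = diag(1,−1,…,−1) be the (n+1)×(n+1) Minkowski matrix (indices 0,…,n) and let g = Aᵀ η A for some invertible real (n+1)×(n+1) matrix A, so g is a symmetric invertible matrix of Lorentzian signature (1,n). Set G = g⁻¹ and assume G₀₀ > 0. Suppose ξ ∈ ℝ^{n+1} satisfies ξᵀ G ξ = 0 and (G ξ)₀ > 0 (i.e. Σ_{j=0}^n G₀ⱼ ξⱼ > 0, the 'larger-root' condition). Then for every ẋ ∈ ℝ^{n+1} with ẋᵀ g ẋ > 0 and ẋ₀ > 0 one has Σ_{j=0}^n ξⱼ ẋⱼ ≥ 0. -/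

import Mathlib

/-!
Pulling back by `A`, the form `x ↦ xᵀ g x` becomes the Minkowski form, so everything reduces to
the fact that causal vectors whose Minkowski products with a fixed causal vector are positive lie in
one half-cone and hence pair nonnegatively (reverse Cauchy–Schwarz). The three vectors are
`u = G e₀`, `v = G ξ` and `ẋ`: with respect to `g` one has `⟨u, u⟩ = G₀₀`, `⟨v, v⟩ = ξᵀ G ξ = 0`,
`⟨u, v⟩ = (G ξ)₀`, `⟨u, ẋ⟩ = ẋ₀` and `⟨v, ẋ⟩ = ∑ ξⱼ ẋⱼ`.
-/

open Matrix

section Minkowski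

variable {n : ℕ}

def minkowskiInner (a b : Fin (n + 1) → ℝ) : ℝ :=
  a 0 * b 0 - ∑ i : Fin n, a i.succ * b i.succ

lemma sq_spatial_inner_le_of_causal {a b : Fin (n + 1) → ℝ}
    (ha : 0 ≤ minkowskiInner a a) (hb : 0 ≤ minkowskiInner b b) :
    (∑ i : Fin n, a i.succ * b i.succ) ^ 2 ≤ (a 0 * b 0) ^ 2 := by
  have hsq : ∀ c : Fin (n + 1) → ℝ, 0 ≤ minkowskiInner c c →
      ∑ i : Fin n, c i.succ ^ 2 ≤ c 0 ^ 2 := fun c hc => by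
    simpa [minkowskiInner, sq] using hc
  calc (∑ i : Fin n, a i.succ * b i.succ) ^ 2
      ≤ (∑ i : Fin n, a i.succ ^ 2) * ∑ i : Fin n, b i.succ ^ 2 :=
        Finset.sum_mul_sq_le_sq_mul_sq _ _ _
    _ ≤ a 0 ^ 2 * b 0 ^ 2 :=
        mul_le_mul (hsq a ha) (hsq b hb) (Finset.sum_nonneg fun _ _ => sq_nonneg _) (sq_nonneg _)
    _ = (a 0 * b 0) ^ 2 := (mul_pow _ _ _).symm

lemma minkowskiInner_nonneg_of_causal {a b : Fin (n + 1) → ℝ}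
    (ha : 0 ≤ minkowskiInner a a) (hb : 0 ≤ minkowskiInner b b) (h : 0 ≤ a 0 * b 0) :
    0 ≤ minkowskiInner a b := by
  have := (abs_le.mp (abs_le_of_sq_le_sq (sq_spatial_inner_le_of_causal ha hb) h)).2
  unfold minkowskiInner
  linarith

lemma time_mul_pos_of_minkowskiInner_pos {a b : Fin (n + 1) → ℝ}
    (ha : 0 ≤ minkowskiInner a a) (hb : 0 ≤ minkowskiInner b b) (h : 0 < minkowskiInner a b) :
    0 < a 0 * b 0 := by
  by_contra! hle
  have := (abs_le.mp (abs_le_of_sq_le_sq (neg_sq (a 0 * b 0) ▸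
    sq_spatial_inner_le_of_causal ha hb) (neg_nonneg.mpr hle))).1
  unfold minkowskiInner at h
  linarith

lemma minkowskiInner_nonneg_of_pos_of_pos {u w y : Fin (n + 1) → ℝ}
    (hu : 0 ≤ minkowskiInner u u) (hw : 0 ≤ minkowskiInner w w) (hy : 0 ≤ minkowskiInner y y)
    (huw : 0 < minkowskiInner u w) (huy : 0 < minkowskiInner u y) :
    0 ≤ minkowskiInner w y := by
  have hprod : 0 < u 0 ^ 2 * (w 0 * y 0) := by
    have := mul_pos (time_mul_pos_of_minkowskiInner_pos hu hw huw)
      (time_mul_pos_of_minkowskiInner_pos hu hy huy)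
    linarith
  exact minkowskiInner_nonneg_of_causal hw hy (pos_of_mul_pos_right hprod (sq_nonneg _)).le

lemma dotProduct_minkowski_mulVec (a b : Fin (n + 1) → ℝ) :
    a ⬝ᵥ diagonal (fun i : Fin (n + 1) => if i = 0 then (1 : ℝ) else -1) *ᵥ b =
      minkowskiInner a b := by
  simp [dotProduct, mulVec_diagonal, Fin.sum_univ_succ, Fin.succ_ne_zero, minkowskiInner,
    sub_eq_add_neg]

lemma isUnit_det_minkowski_diagonal :
    IsUnit (diagonal fun i : Fin (n + 1) => if i = 0 then (1 : ℝ) else -1).det := by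
  refine isUnit_det_of_left_inverse (B := diagonal fun i => if i = 0 then 1 else -1) ?_
  rw [diagonal_mul_diagonal, ← diagonal_one]
  congr 1; ext i; split_ifs <;> norm_num

end Minkowski

section Bilinear

variable {m R : Type*} [Fintype m] [CommSemiring R]

lemma dotProduct_transpose_mul_mul_mulVec (A D : Matrix m m R) (x y : m → R) : x ⬝ᵥ (Aᵀ * D * A) *ᵥ y = (A *ᵥ x) ⬝ᵥ D *ᵥ (A *ᵥ y) := by
  rw [← mulVec_mulVec, ← mulVec_mulVec, dotProduct_mulVec, vecMul_transpose, dotProduct_mulVec]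

lemma mulVec_dotProduct_mulVec_of_mul_eq_one [DecidableEq m] {g G : Matrix m m R}
    (hsymm : gᵀ = g) (hgG : g * G = 1) (z x : m → R) : (G *ᵥ z) ⬝ᵥ g *ᵥ x = z ⬝ᵥ x := by
  rw [dotProduct_mulVec, ← hsymm, vecMul_transpose, mulVec_mulVec, hgG, one_mulVec]

end Bilinear

theorem white_hole_conormal_pairing_nonneg (n : ℕ)
    (A g G : Matrix (Fin (n + 1)) (Fin (n + 1)) ℝ)
    (hA : IsUnit A.det)
    (hg : g = A.transpose *
      Matrix.diagonal (fun i : Fin (n + 1) => if i = 0 then (1 : ℝ) else -1) * A)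
    (hG : G = g⁻¹)
    (hG00 : 0 < G 0 0)
    (ξ : Fin (n + 1) → ℝ)
    (hnull : dotProduct ξ (G.mulVec ξ) = 0)
    (hroot : 0 < G.mulVec ξ 0) :
    ∀ xdot : Fin (n + 1) → ℝ,
      0 < dotProduct xdot (g.mulVec xdot) → 0 < xdot 0 →
      0 ≤ ∑ j : Fin (n + 1), ξ j * xdot j := by
  intro xdot hx hx0
  have hgG : g * G = 1 := hG ▸ mul_nonsing_inv g <| by
    rw [hg, det_mul, det_mul, det_transpose]
    exact (hA.mul isUnit_det_minkowski_diagonal).mul hA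
  have hsymm : gᵀ = g := by simp [hg, transpose_mul, mul_assoc]
  have hform (a b) : a ⬝ᵥ g *ᵥ b = minkowskiInner (A *ᵥ a) (A *ᵥ b) := by
    rw [hg, dotProduct_transpose_mul_mul_mulVec, dotProduct_minkowski_mulVec]
  have hpair := mulVec_dotProduct_mulVec_of_mul_eq_one hsymm hgG
  set u := G *ᵥ Pi.single 0 1
  set v := G *ᵥ ξ
  have huu : u ⬝ᵥ g *ᵥ u = G 0 0 := by rw [hpair, single_one_dotProduct]; simp [u]
  have huv : u ⬝ᵥ g *ᵥ v = v 0 := by rw [hpair, single_one_dotProduct]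
  have hux : u ⬝ᵥ g *ᵥ xdot = xdot 0 := by rw [hpair, single_one_dotProduct]
  have hvv : v ⬝ᵥ g *ᵥ v = 0 := by rw [hpair, hnull]
  have key := minkowskiInner_nonneg_of_pos_of_pos (u := A *ᵥ u) (w := A *ᵥ v) (y := A *ᵥ xdot)
    (by rw [← hform, huu]; exact hG00.le) (by rw [← hform, hvv]) (by rw [← hform]; exact hx.le)
    (by rw [← hform, huv]; exact hroot) (by rw [← hform, hux]; exact hx0)
  rw [← hform, hpair] at key
  exact key
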